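/- (Lemma 4.3, high-power case.) Let P > 4 and define g₃ᴿ : ℝ → ℝ by g₃ᴿ(C) = 1/2 + (1/2)·erf(√C − √(P/2)). Set ζ̂₁ = ((√(P/2) − √(P/2 − 2))/2)² and ζ̂₂ = ((√(P/2) + √(P/2 − 2))/2)², so ζ̂₁ < ζ̂₂. Then: (i) g₃ᴿ is concave on [0, ζ̂₁] (ConcaveOn ℝ (Set.Icc 0 ζ̂₁) g₃ᴿ), convex on [ζ̂₁, ζ̂₂] (ConvexOn ℝ (Set.Icc ζ̂₁ ζ̂₂) g₃ᴿ), and concave on [ζ̂₂, ∞) (ConcaveOn ℝ (Set.Ici ζ̂₂) g₃ᴿ); and (ii) there exist τ̂₁ and τ̂₂ with 0 < τ̂₁ ≤ ζ̂₁ and τ̂₂ ≥ ζ̂₂ such that for every C ≥ 0, g₃ᴿ(C) ≤ ((g₃ᴿ(τ̂₂) − g₃ᴿ(τ̂₁))/(τ̂₂ − τ̂₁))·(C − τ̂₁) + g₃ᴿ(τ̂₁); that is, the whole graph of g₃ᴿ over [0, ∞) lies below the straight line through (τ̂₁, g₃ᴿ(τ̂₁)) and (τ̂₂, g₃ᴿ(τ̂₂)).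 -/

import Mathlib

open MeasureTheory ProbabilityTheory Real Set

noncomputable def erf (x : ℝ) : ℝ :=
  (2 / Real.sqrt Real.pi) * ∫ t in (0:ℝ)..x, Real.exp (-t^2)

open Filter Topology

/-!
Write `C = s²` and `a = √(P/2)`. The derivative of `g₃ᴿ` is `exp (-(s - a)²) / (2√π s)`, and its
own derivative in `C` has the sign of `-(2s² - 2as + 1) = -2 (s - s₁) (s - s₂)`, where
`s₁, s₂ = (a ∓ √(a² - 2)) / 2` and `ζ̂ᵢ = sᵢ²`; this gives (i).

For (ii), let `c m` and `d m` be the least intercepts of a line of slope `m` lying above `g₃ᴿ` on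
`[0, ζ̂₁]` and on `[ζ̂₂, T]`. Both depend continuously on `m` and `c - d` changes sign, so some
slope gives a line supporting the graph on both intervals, touching it at `τ̂₁ ≤ ζ̂₁` and
`τ̂₂ ≥ ζ̂₂`. By convexity it also lies above the graph on `[ζ̂₁, ζ̂₂]`, and beyond `T` because
`g₃ᴿ ≤ 1`. Finally `τ̂₁ > 0` because `g₃ᴿ` has infinite slope at `0`.
-/

lemma continuous_exp_neg_sq : Continuous fun t : ℝ => exp (-t ^ 2) := by fun_prop

lemma hasDerivAt_erf (x : ℝ) : HasDerivAt erf (2 / √π * exp (-x ^ 2)) x :=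
  (intervalIntegral.integral_hasDerivAt_right (continuous_exp_neg_sq.intervalIntegrable 0 x)
    (continuous_exp_neg_sq.stronglyMeasurableAtFilter _ _)
    continuous_exp_neg_sq.continuousAt).const_mul _

lemma continuous_erf : Continuous erf :=
  continuous_iff_continuousAt.2 fun x => (hasDerivAt_erf x).continuousAt

lemma strictMono_erf : StrictMono erf :=
  strictMono_of_hasDerivAt_pos hasDerivAt_erf fun x => by positivity

lemma integral_exp_neg_sq_le (x : ℝ) : ∫ t in (0:ℝ)..x, exp (-t ^ 2) ≤ √π / 2 := by
  rcases le_total 0 x with hx | hx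
  · have hint : IntegrableOn (fun t : ℝ => exp (-t ^ 2)) (Ioi 0) := by
      simpa using (integrable_exp_neg_mul_sq one_pos).integrableOn
    calc ∫ t in (0:ℝ)..x, exp (-t ^ 2) = ∫ t in Ioc 0 x, exp (-t ^ 2) :=
          intervalIntegral.integral_of_le hx
      _ ≤ ∫ t in Ioi 0, exp (-t ^ 2) :=
          setIntegral_mono_set hint (.of_forall fun t => (exp_pos _).le)
            Ioc_subset_Ioi_self.eventuallyLE
      _ = √π / 2 := by simpa using integral_gaussian_Ioi 1
  · calc ∫ t in (0:ℝ)..x, exp (-t ^ 2) = -∫ t in x..0, exp (-t ^ 2) :=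
          intervalIntegral.integral_symm _ _
      _ ≤ 0 := neg_nonpos.2 (intervalIntegral.integral_nonneg hx fun t _ => (exp_pos _).le)
      _ ≤ √π / 2 := by positivity

lemma erf_le_one (x : ℝ) : erf x ≤ 1 := by
  have hπ : 0 < √π := sqrt_pos.2 pi_pos
  rw [erf, div_mul_eq_mul_div, div_le_one hπ]
  linarith [integral_exp_neg_sq_le x]

noncomputable def erfSqrtCDF (a C : ℝ) : ℝ := 1 / 2 + 1 / 2 * erf (√C - a)

noncomputable def erfSqrtDensity (a s : ℝ) : ℝ := exp (-(s - a) ^ 2) / (2 * √π * s)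

section erfSqrtCDF

variable {a : ℝ}

lemma continuous_erfSqrtCDF : Continuous (erfSqrtCDF a) :=
  continuous_const.add (continuous_const.mul (continuous_erf.comp (by fun_prop)))

lemma strictMonoOn_erfSqrtCDF : StrictMonoOn (erfSqrtCDF a) (Ici 0) := fun x hx y _ hxy => by
  have := strictMono_erf (sub_lt_sub_right (sqrt_lt_sqrt hx hxy) a)
  unfold erfSqrtCDF; linarith

lemma erfSqrtCDF_le_one (C : ℝ) : erfSqrtCDF a C ≤ 1 := by
  unfold erfSqrtCDF; linarith [erf_le_one (√C - a)]

lemma hasDerivAt_erfSqrtCDF {C : ℝ} (hC : 0 < C) :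
    HasDerivAt (erfSqrtCDF a) (erfSqrtDensity a √C) C := by
  have hsqrt := (hasDerivAt_sqrt hC.ne').sub_const a
  refine (((hasDerivAt_erf _).comp C hsqrt).const_mul (1 / 2)).const_add (1 / 2) |>.congr_deriv ?_
  have : 0 < √π := sqrt_pos.2 pi_pos
  rw [erfSqrtDensity]
  field_simp

lemma erfSqrtDensity_ge {s t : ℝ} (hs : 0 < s) (hsa : s ≤ 2 * a) (hst : s ≤ t) :
    exp (-a ^ 2) / (2 * √π * t) ≤ erfSqrtDensity a s := by
  have : 0 < √π := sqrt_pos.2 pi_pos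
  refine div_le_div₀ (exp_pos _).le (exp_le_exp.2 ?_) (by positivity) (by gcongr)
  nlinarith

lemma tendsto_slope_erfSqrtCDF_zero (ha : 0 < a) :
    Tendsto (slope (erfSqrtCDF a) 0) (𝓝[>] 0) atTop := by
  have hsqrt : Tendsto (fun x : ℝ => √x) (𝓝[>] 0) (𝓝[>] 0) := by
    simpa using (continuous_sqrt.continuousWithinAt (s := Ioi 0) (x := 0)).tendsto_nhdsWithin
      (t := Ioi 0) fun x hx => sqrt_pos.2 hx
  have hlower : Tendsto (fun x => exp (-a ^ 2) / (2 * √π) * (√x)⁻¹) (𝓝[>] 0) atTop :=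
    hsqrt.inv_tendsto_nhdsGT_zero.const_mul_atTop (by positivity)
  refine tendsto_atTop_mono' _ ?_ hlower
  filter_upwards [Ioo_mem_nhdsGT (by positivity : (0:ℝ) < a ^ 2)] with x hx
  obtain ⟨ξ, hξ, hslope⟩ := exists_hasDerivAt_eq_slope (erfSqrtCDF a) (fun C => erfSqrtDensity a √C)
    hx.1 continuous_erfSqrtCDF.continuousOn fun ξ hξ => hasDerivAt_erfSqrtCDF hξ.1
  have hξx : √ξ ≤ √x := sqrt_le_sqrt hξ.2.le
  have hxa : √x < a := (sqrt_lt' ha).2 hx.2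
  rw [slope_def_field, ← hslope]
  calc exp (-a ^ 2) / (2 * √π) * (√x)⁻¹ = exp (-a ^ 2) / (2 * √π * √x) := by ring
    _ ≤ erfSqrtDensity a √ξ := erfSqrtDensity_ge (sqrt_pos.2 hξ.1) (by linarith) hξx

lemma hasDerivAt_erfSqrtDensity_sqrt {s₁ s₂ C : ℝ} (h : 2 * s₁ * s₂ = 1) (hC : 0 < C) :
    HasDerivAt (fun C => erfSqrtDensity (s₁ + s₂) √C)
      (-(exp (-(√C - (s₁ + s₂)) ^ 2) * ((√C - s₁) * (√C - s₂))) / (2 * √π * C * √C)) C := by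
  have hs : 0 < √C := sqrt_pos.2 hC
  have hπ : 0 < √π := sqrt_pos.2 pi_pos
  have hexp := ((((hasDerivAt_sqrt hC.ne').sub_const (s₁ + s₂)).pow 2).neg).exp
  have hden := (hasDerivAt_sqrt hC.ne').const_mul (2 * √π)
  refine (hexp.div hden (by positivity)).congr_deriv ?_
  field_simp
  simp only [Pi.neg_apply, Pi.pow_apply]
  rw [sq_sqrt hC.le]
  linear_combination exp (-(√C - (s₁ + s₂)) ^ 2) * C * h

lemma concaveOn_erfSqrtCDF {s₁ s₂ : ℝ} (ha : s₁ + s₂ = a) (h : 2 * s₁ * s₂ = 1) {D : Set ℝ}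
    (hD : Convex ℝ D) (hsign : ∀ C ∈ interior D, 0 < C ∧ 0 ≤ (√C - s₁) * (√C - s₂)) :
    ConcaveOn ℝ D (erfSqrtCDF a) := by
  subst ha
  refine concaveOn_of_hasDerivWithinAt2_nonpos hD continuous_erfSqrtCDF.continuousOn
    (fun C hC => (hasDerivAt_erfSqrtCDF (hsign C hC).1).hasDerivWithinAt)
    (fun C hC => (hasDerivAt_erfSqrtDensity_sqrt h (hsign C hC).1).hasDerivWithinAt)
    fun C hC => ?_
  obtain ⟨hC0, hq⟩ := hsign C hC
  exact div_nonpos_of_nonpos_of_nonneg (neg_nonpos.2 (mul_nonneg (exp_pos _).le hq))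
    (by positivity)

lemma convexOn_erfSqrtCDF {s₁ s₂ : ℝ} (ha : s₁ + s₂ = a) (h : 2 * s₁ * s₂ = 1) {D : Set ℝ}
    (hD : Convex ℝ D) (hsign : ∀ C ∈ interior D, 0 < C ∧ (√C - s₁) * (√C - s₂) ≤ 0) :
    ConvexOn ℝ D (erfSqrtCDF a) := by
  subst ha
  refine convexOn_of_hasDerivWithinAt2_nonneg hD continuous_erfSqrtCDF.continuousOn
    (fun C hC => (hasDerivAt_erfSqrtCDF (hsign C hC).1).hasDerivWithinAt)
    (fun C hC => (hasDerivAt_erfSqrtDensity_sqrt h (hsign C hC).1).hasDerivWithinAt)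
    fun C hC => ?_
  obtain ⟨hC0, hq⟩ := hsign C hC
  exact div_nonneg (neg_nonneg.2 (mul_nonpos_of_nonneg_of_nonpos (exp_pos _).le hq))
    (by positivity)

lemma concaveOn_erfSqrtCDF_Icc_zero {s₁ s₂ : ℝ} (ha : s₁ + s₂ = a) (h : 2 * s₁ * s₂ = 1)
    (hs₁ : 0 < s₁) (hs : s₁ < s₂) :
    ConcaveOn ℝ (Icc 0 (s₁ ^ 2)) (erfSqrtCDF a) := by
  refine concaveOn_erfSqrtCDF ha h (convex_Icc _ _) fun C hC => ?_
  rw [interior_Icc] at hC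
  have hC₁ : √C < s₁ := (sqrt_lt' hs₁).2 hC.2
  exact ⟨hC.1, mul_nonneg_of_nonpos_of_nonpos (by linarith) (by linarith)⟩

lemma convexOn_erfSqrtCDF_Icc {s₁ s₂ : ℝ} (ha : s₁ + s₂ = a) (h : 2 * s₁ * s₂ = 1)
    (hs₁ : 0 < s₁) (hs : s₁ < s₂) :
    ConvexOn ℝ (Icc (s₁ ^ 2) (s₂ ^ 2)) (erfSqrtCDF a) := by
  refine convexOn_erfSqrtCDF ha h (convex_Icc _ _) fun C hC => ?_
  rw [interior_Icc] at hC
  have hC₁ : s₁ < √C := (lt_sqrt hs₁.le).2 hC.1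
  have hC₂ : √C < s₂ := (sqrt_lt' (hs₁.trans hs)).2 hC.2
  exact ⟨(pow_pos hs₁ 2).trans hC.1,
    mul_nonpos_of_nonneg_of_nonpos (by linarith) (by linarith)⟩

lemma concaveOn_erfSqrtCDF_Ici {s₁ s₂ : ℝ} (ha : s₁ + s₂ = a) (h : 2 * s₁ * s₂ = 1)
    (hs₁ : 0 < s₁) (hs : s₁ < s₂) :
    ConcaveOn ℝ (Ici (s₂ ^ 2)) (erfSqrtCDF a) := by
  refine concaveOn_erfSqrtCDF ha h (convex_Ici _) fun C hC => ?_
  rw [interior_Ici] at hC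
  have hC₂ : s₂ < √C := (lt_sqrt (hs₁.trans hs).le).2 hC
  exact ⟨(pow_pos (hs₁.trans hs) 2).trans hC, mul_nonneg (by linarith) (by linarith)⟩

end erfSqrtCDF

noncomputable def supportIntercept (G : ℝ → ℝ) (K : Set ℝ) (m : ℝ) : ℝ :=
  sSup ((fun x => G x - m * x) '' K)

section supportIntercept

variable {G : ℝ → ℝ} {K L : Set ℝ}

lemma sub_mul_le_supportIntercept (hK : IsCompact K) (hG : Continuous G) {x : ℝ} (hx : x ∈ K)
    (m : ℝ) : G x - m * x ≤ supportIntercept G K m :=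
  le_csSup (hK.image (by fun_prop)).bddAbove (mem_image_of_mem _ hx)

lemma exists_sub_mul_eq_supportIntercept (hK : IsCompact K) (hne : K.Nonempty) (hG : Continuous G)
    (m : ℝ) : ∃ x ∈ K, G x - m * x = supportIntercept G K m :=
  (hK.image (by fun_prop)).sSup_mem (hne.image _)

lemma supportIntercept_le (hne : K.Nonempty) {m b : ℝ} (h : ∀ x ∈ K, G x - m * x ≤ b) :
    supportIntercept G K m ≤ b :=
  csSup_le (hne.image _) (forall_mem_image.2 h)

lemma continuous_supportIntercept (hK : IsCompact K) (hG : Continuous G) :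
    Continuous (supportIntercept G K) :=
  hK.continuous_sSup (f := fun m x => G x - m * x) (by fun_prop)

lemma exists_supportIntercept_eq (hK : IsCompact K) (hL : IsCompact L) (hG : Continuous G)
    {m₁ m₂ : ℝ} (hm : m₁ ≤ m₂) (h₁ : supportIntercept G K m₁ ≤ supportIntercept G L m₁)
    (h₂ : supportIntercept G L m₂ ≤ supportIntercept G K m₂) :
    ∃ m ∈ Icc m₁ m₂, supportIntercept G K m = supportIntercept G L m := by
  obtain ⟨m, hm, hzero⟩ := intermediate_value_Icc hm
    ((continuous_supportIntercept hK hG).sub (continuous_supportIntercept hL hG)).continuousOn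
    ⟨sub_nonpos.2 h₁, sub_nonneg.2 h₂⟩
  exact ⟨m, hm, sub_eq_zero.1 hzero⟩

lemma sub_mul_le_supportIntercept_of_eq {z₁ z₂ T m : ℝ} (hz₁ : 0 ≤ z₁) (hz : z₁ ≤ z₂) (hT : z₂ ≤ T)
    (hG : Continuous G) (hconv : ConvexOn ℝ (Icc z₁ z₂) G)
    (htail : ∀ C, T < C → G C - m * C ≤ G z₂ - m * z₂)
    (heq : supportIntercept G (Icc 0 z₁) m = supportIntercept G (Icc z₂ T) m) {C : ℝ} (hC : 0 ≤ C) :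
    G C - m * C ≤ supportIntercept G (Icc 0 z₁) m := by
  have hleft : ∀ x ∈ Icc 0 z₁, G x - m * x ≤ supportIntercept G (Icc 0 z₁) m :=
    fun x hx => sub_mul_le_supportIntercept isCompact_Icc hG hx m
  have hright : ∀ x ∈ Icc z₂ T, G x - m * x ≤ supportIntercept G (Icc 0 z₁) m :=
    fun x hx => heq ▸ sub_mul_le_supportIntercept isCompact_Icc hG hx m
  rcases le_or_gt C z₁ with h₁ | h₁
  · exact hleft C ⟨hC, h₁⟩
  rcases le_or_gt C z₂ with h₂ | h₂
  · have hF : ConvexOn ℝ (Icc z₁ z₂) fun x => G x - m * x :=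
      hconv.sub ((LinearMap.mulLeft ℝ m).concaveOn (convex_Icc z₁ z₂))
    calc G C - m * C ≤ max (G z₁ - m * z₁) (G z₂ - m * z₂) :=
          hF.le_on_segment (left_mem_Icc.2 hz) (right_mem_Icc.2 hz)
            (by rw [segment_eq_Icc hz]; exact ⟨h₁.le, h₂⟩)
      _ ≤ _ := max_le (hleft z₁ ⟨hz₁, le_rfl⟩) (hright z₂ ⟨le_rfl, hT⟩)
  rcases le_or_gt C T with h₃ | h₃
  · exact hright C ⟨h₂.le, h₃⟩
  · exact (htail C h₃).trans (hright z₂ ⟨le_rfl, hT⟩)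

lemma pos_of_sub_mul_eq_supportIntercept (hG : Continuous G)
    (hslope : Tendsto (slope G 0) (𝓝[>] 0) atTop) {z τ m : ℝ} (hz : 0 < z) (hτ : τ ∈ Icc 0 z)
    (he : G τ - m * τ = supportIntercept G (Icc 0 z) m) : 0 < τ := by
  refine hτ.1.lt_of_ne' fun hτ_zero => ?_
  obtain ⟨x, hx, hxz⟩ := ((hslope.eventually_gt_atTop m).and (Ioo_mem_nhdsGT hz)).exists
  rw [slope_def_field, sub_zero, lt_div_iff₀ hxz.1] at hx
  have := sub_mul_le_supportIntercept isCompact_Icc hG ⟨hxz.1.le, hxz.2.le⟩ m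
  rw [hτ_zero] at he
  linarith

end supportIntercept

theorem exists_secant_majorant {G : ℝ → ℝ} {z₁ z₂ B : ℝ} (hz₁ : 0 < z₁) (hz : z₁ < z₂)
    (hG : Continuous G) (hmono : StrictMonoOn G (Ici 0)) (hB : ∀ x, 0 ≤ x → G x ≤ B)
    (hslope : Tendsto (slope G 0) (𝓝[>] 0) atTop) (hconv : ConvexOn ℝ (Icc z₁ z₂) G) :
    ∃ τ₁ τ₂, 0 < τ₁ ∧ τ₁ ≤ z₁ ∧ z₂ ≤ τ₂ ∧
      ∀ C, 0 ≤ C → G C ≤ (G τ₂ - G τ₁) / (τ₂ - τ₁) * (C - τ₁) + G τ₁ := by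
  have hz₂ : 0 < z₂ := hz₁.trans hz
  -- At slope `m₁` the right interval needs the larger intercept, at slope `m₂` the left one; and
  -- for slopes `≥ m₁` the line through `(z₂, G z₂)` stays above `B` to the right of `T`.
  have hK : (Icc 0 z₁).Nonempty := nonempty_Icc.2 hz₁.le
  set m₁ := (G z₂ - G z₁) / (2 * z₂) with hm₁_def
  have hm₁ : 0 < m₁ := div_pos (by linarith [hmono hz₁.le hz₂.le hz]) (by positivity)
  set T := z₂ + (B - G z₂) / m₁ with hT_def
  have hT : z₂ ≤ T := le_add_of_nonneg_right (div_nonneg (by linarith [hB z₂ hz₂.le]) hm₁.le)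
  have hL : (Icc z₂ T).Nonempty := nonempty_Icc.2 hT
  set m₂ := m₁ + (B - G 0 + 1) / z₂ with hm₂_def
  have hm₁₂ : m₁ ≤ m₂ := le_add_of_nonneg_right (div_nonneg (by linarith [hB 0 le_rfl]) hz₂.le)
  have h₁ : supportIntercept G (Icc 0 z₁) m₁ ≤ supportIntercept G (Icc z₂ T) m₁ := by
    refine (supportIntercept_le hK fun x hx => ?_).trans
      (sub_mul_le_supportIntercept isCompact_Icc hG ⟨le_rfl, hT⟩ m₁)
    have : 2 * (m₁ * z₂) = G z₂ - G z₁ := by rw [hm₁_def]; field_simp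
    nlinarith [hmono.monotoneOn hx.1 hz₁.le hx.2, mul_nonneg hm₁.le hx.1]
  have h₂ : supportIntercept G (Icc z₂ T) m₂ ≤ supportIntercept G (Icc 0 z₁) m₂ := by
    refine (supportIntercept_le hL fun x hx => ?_).trans
      (sub_mul_le_supportIntercept isCompact_Icc hG ⟨le_rfl, hz₁.le⟩ m₂)
    have : m₂ * z₂ = m₁ * z₂ + (B - G 0 + 1) := by rw [hm₂_def]; field_simp
    nlinarith [hB x (hz₂.le.trans hx.1), mul_le_mul_of_nonneg_left hx.1 (hm₁.le.trans hm₁₂),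
      mul_pos hm₁ hz₂]
  obtain ⟨m, hm, heq⟩ := exists_supportIntercept_eq isCompact_Icc isCompact_Icc hG hm₁₂ h₁ h₂
  have htail : ∀ C, T < C → G C - m * C ≤ G z₂ - m * z₂ := fun C hC => by
    have : m₁ * (T - z₂) = B - G z₂ := by rw [hT_def]; field_simp; ring
    nlinarith [hB C (hz₂.le.trans (hT.trans hC.le)), mul_le_mul_of_nonneg_right hm.1
      (by linarith : 0 ≤ C - z₂), mul_le_mul_of_nonneg_left hC.le hm₁.le]
  obtain ⟨τ₁, hτ₁, he₁⟩ := exists_sub_mul_eq_supportIntercept isCompact_Icc hK hG m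
  obtain ⟨τ₂, hτ₂, he₂⟩ := exists_sub_mul_eq_supportIntercept isCompact_Icc hL hG m
  refine ⟨τ₁, τ₂, pos_of_sub_mul_eq_supportIntercept hG hslope hz₁ hτ₁ he₁, hτ₁.2, hτ₂.1,
    fun C hC => ?_⟩
  have hslope_eq : (G τ₂ - G τ₁) / (τ₂ - τ₁) = m := by
    rw [div_eq_iff (by linarith [hτ₁.2, hτ₂.1])]; linarith
  rw [hslope_eq]
  linarith [sub_mul_le_supportIntercept_of_eq hz₁.le hz.le hT hG hconv htail heq hC]

theorem stmt_19 (P : ℝ) (hP : 4 < P)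
    (g₃R : ℝ → ℝ)
    (hg₃R : ∀ C, g₃R C = 1/2 + (1/2) * erf (Real.sqrt C - Real.sqrt (P/2)))
    (ζhat₁ ζhat₂ : ℝ)
    (hζhat₁ : ζhat₁ = ((Real.sqrt (P/2) - Real.sqrt (P/2 - 2)) / 2)^2)
    (hζhat₂ : ζhat₂ = ((Real.sqrt (P/2) + Real.sqrt (P/2 - 2)) / 2)^2) :
    ζhat₁ < ζhat₂ ∧
    (ConcaveOn ℝ (Set.Icc 0 ζhat₁) g₃R ∧
      ConvexOn ℝ (Set.Icc ζhat₁ ζhat₂) g₃R ∧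
      ConcaveOn ℝ (Set.Ici ζhat₂) g₃R) ∧
    ∃ τhat₁ τhat₂ : ℝ, 0 < τhat₁ ∧ τhat₁ ≤ ζhat₁ ∧ ζhat₂ ≤ τhat₂ ∧
      ∀ C : ℝ, 0 ≤ C →
        g₃R C ≤ ((g₃R τhat₂ - g₃R τhat₁) / (τhat₂ - τhat₁)) * (C - τhat₁) + g₃R τhat₁ := by
  obtain rfl : g₃R = erfSqrtCDF √(P / 2) := funext hg₃R
  set a := √(P / 2) with ha_def
  set r := √(P / 2 - 2) with hr_def
  have hr : 0 < r := sqrt_pos.2 (by linarith)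
  have hra : r < a := sqrt_lt_sqrt (by linarith) (by linarith)
  have hr2 : r ^ 2 = a ^ 2 - 2 := by
    rw [hr_def, ha_def, sq_sqrt (by linarith), sq_sqrt (by linarith)]
  set s₁ := (a - r) / 2
  set s₂ := (a + r) / 2
  have hsum : s₁ + s₂ = a := by ring
  have hprod : 2 * s₁ * s₂ = 1 := by linear_combination (-1 / 2 : ℝ) * hr2
  have hs₁ : 0 < s₁ := half_pos (sub_pos.2 hra)
  have hs : s₁ < s₂ := by linarith [show s₂ - s₁ = r by ring]
  subst hζhat₁ hζhat₂
  have hζ : s₁ ^ 2 < s₂ ^ 2 := pow_lt_pow_left₀ hs hs₁.le two_ne_zero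
  have hconv := convexOn_erfSqrtCDF_Icc hsum hprod hs₁ hs
  refine ⟨hζ, ⟨concaveOn_erfSqrtCDF_Icc_zero hsum hprod hs₁ hs, hconv,
    concaveOn_erfSqrtCDF_Ici hsum hprod hs₁ hs⟩, ?_⟩
  exact exists_secant_majorant (pow_pos hs₁ 2) hζ continuous_erfSqrtCDF strictMonoOn_erfSqrtCDF
    (fun C _ => erfSqrtCDF_le_one C) (tendsto_slope_erfSqrtCDF_zero (hr.trans hra)) hconv
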